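/- arXiv:2412.06406 — 6 statements merged into one kernel-verified Lean document; each statement's English description precedes it below -/
import Mathlib

section
/- Let p ≥ 2 be an integer, S_p(x) = px mod 1 on [0,1), μ a Borel probability measure on [0,1), and φ : [0,1] → [0,1] its distribution function φ(x) = μ([0,x)). Then μ is invariant under S_p if and only if φ(x) = Σ_{k=0}^{p−1} [φ((x+k)/p) − φ(k/p)] for every x ∈ [0,1]. -/
/-!
On `[0, 1)` the map `T y = p y mod 1` has the `p` branches `[k/p, (k+1)/p)`, so for
`x ∈ [0, 1]` the set `T⁻¹[0, x)` is the disjoint union of the intervals `[k/p, (x+k)/p)`, and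
`μ(T⁻¹[0, x))` is exactly the right-hand side of the functional equation. Thus the functional
equation says that `T_*μ` and `μ` agree on every `[0, x)`; as both measures live on `[0, 1)`,
this forces `T_*μ = μ`.
-/

open MeasureTheory Set

theorem mem_Ico_div_natCast_iff {p : ℕ} (hp : 0 < p) {a b y : ℝ} :
    y ∈ Ico (a / p) (b / p) ↔ a ≤ p * y ∧ p * y < b := by
  have hp' : (0 : ℝ) < p := Nat.cast_pos.2 hp
  rw [mem_Ico, div_le_iff₀' hp', lt_div_iff₀' hp']

theorem natFloor_mul_eq_of_mem_Ico {p : ℕ} (hp : 0 < p) {x y : ℝ} (hx : x ≤ 1) {k : ℕ}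
    (hy : y ∈ Ico ((k : ℝ) / p) ((x + k) / p)) : ⌊(p : ℝ) * y⌋₊ = k := by
  rw [mem_Ico_div_natCast_iff hp] at hy
  rw [Nat.floor_eq_iff ((Nat.cast_nonneg k).trans hy.1)]
  constructor <;> linarith [hy.1, hy.2]

theorem add_div_mem_Icc {p k : ℕ} (hp : 0 < p) (hk : k < p) {x : ℝ} (hx : x ∈ Icc (0 : ℝ) 1) :
    (x + k) / p ∈ Icc (0 : ℝ) 1 := by
  have hp' : (0 : ℝ) < p := Nat.cast_pos.2 hp
  have hk' : (k : ℝ) + 1 ≤ p := by exact_mod_cast hk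
  exact ⟨by positivity [hx.1], by rw [div_le_one hp']; linarith [hx.2]⟩

theorem Int.fract_eq_sub_natCast {R : Type*} [Ring R] [LinearOrder R] [IsOrderedRing R]
    [FloorRing R] {a : R} {k : ℕ} (h₁ : (k : R) ≤ a) (h₂ : a < k + 1) :
    Int.fract a = a - k :=
  Int.fract_eq_iff.2 ⟨sub_nonneg.2 h₁, sub_lt_iff_lt_add'.2 h₂, k, by simp⟩

theorem preimage_fract_mul_Ico_inter_Ico {p : ℕ} (hp : 0 < p) {x : ℝ} (hx : x ≤ 1) :
    (fun y => Int.fract ((p : ℝ) * y)) ⁻¹' Ico 0 x ∩ Ico 0 1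
      = ⋃ k ∈ Finset.range p, Ico ((k : ℝ) / p) ((x + k) / p) := by
  have hp' : (0 : ℝ) < p := Nat.cast_pos.2 hp
  ext y
  simp only [mem_inter_iff, mem_preimage, mem_iUnion, Finset.mem_range, exists_prop,
    mem_Ico_div_natCast_iff hp]
  constructor
  · rintro ⟨⟨-, hfract⟩, hy₀, hy₁⟩
    have hpy : 0 ≤ (p : ℝ) * y := by positivity
    rw [Int.fract_eq_sub_natCast (Nat.floor_le hpy) (Nat.lt_floor_add_one _)] at hfract
    refine ⟨⌊(p : ℝ) * y⌋₊, (Nat.floor_lt hpy).2 (by nlinarith), Nat.floor_le hpy, ?_⟩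
    linarith
  · rintro ⟨k, hk, hky, hyk⟩
    have hk' : (k : ℝ) + 1 ≤ p := by exact_mod_cast hk
    rw [Int.fract_eq_sub_natCast hky (by linarith)]
    refine ⟨⟨by linarith, by linarith⟩, ?_, ?_⟩ <;> nlinarith

section Measure

variable {κ : Measure ℝ}

theorem measureReal_Ico_eq_sub [IsFiniteMeasure κ] {a b c : ℝ} (hca : c ≤ a) (hab : a ≤ b) :
    κ.real (Ico a b) = κ.real (Ico c b) - κ.real (Ico c a) := by
  rw [← Ico_union_Ico_eq_Ico hca hab, measureReal_union Ico_disjoint_Ico_same measurableSet_Ico]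
  ring

theorem measureReal_preimage_fract_mul_Ico [IsFiniteMeasure κ] (hκ : κ (Ico 0 1)ᶜ = 0)
    {p : ℕ} (hp : 0 < p) {x : ℝ} (hx : x ∈ Icc (0 : ℝ) 1) :
    κ.real ((fun y => Int.fract ((p : ℝ) * y)) ⁻¹' Ico 0 x)
      = ∑ k ∈ Finset.range p, (κ.real (Ico 0 ((x + k) / p)) - κ.real (Ico 0 ((k : ℝ) / p))) := by
  have hdisj : PairwiseDisjoint (Finset.range p : Set ℕ) fun k => Ico ((k : ℝ) / p) ((x + k) / p) :=
    (pairwiseDisjoint_fiber (fun y : ℝ => ⌊(p : ℝ) * y⌋₊) _).mono_on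
      fun k _ y hy => natFloor_mul_eq_of_mem_Ico hp hx.2 hy
  rw [measureReal_def, ← measure_inter_conull hκ, ← measureReal_def,
    preimage_fract_mul_Ico_inter_Ico hp hx.2,
    measureReal_biUnion_finset hdisj fun _ _ => measurableSet_Ico]
  refine Finset.sum_congr rfl fun k _ => measureReal_Ico_eq_sub (by positivity) ?_
  gcongr
  linarith [hx.1]

theorem measure_Iio_eq_measure_Ico_projIcc (hκ : κ (Ico 0 1)ᶜ = 0) (x : ℝ) :
    κ (Iio x) = κ (Ico 0 (projIcc 0 1 zero_le_one x)) := by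
  rw [← measure_inter_conull hκ]
  congr 1
  ext y
  simp only [mem_inter_iff, mem_Iio, mem_Ico, projIcc, lt_max_iff, lt_min_iff]
  constructor
  · rintro ⟨hyx, hy₀, hy₁⟩
    exact ⟨hy₀, Or.inr ⟨hy₁, hyx⟩⟩
  · rintro ⟨hy₀, hy | ⟨hy₁, hyx⟩⟩
    · exact absurd hy₀ hy.not_ge
    · exact ⟨hyx, hy₀, hy₁⟩

theorem Measure.ext_of_Ico_zero {κ₁ κ₂ : Measure ℝ} [IsFiniteMeasure κ₁] [IsFiniteMeasure κ₂]
    (h₁ : κ₁ (Ico 0 1)ᶜ = 0) (h₂ : κ₂ (Ico 0 1)ᶜ = 0)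
    (h : ∀ x ∈ Icc (0 : ℝ) 1, κ₁ (Ico 0 x) = κ₂ (Ico 0 x)) : κ₁ = κ₂ := by
  have hIio : ∀ x, κ₁ (Iio x) = κ₂ (Iio x) := fun x => by
    rw [measure_Iio_eq_measure_Ico_projIcc h₁, measure_Iio_eq_measure_Ico_projIcc h₂]
    exact h _ (projIcc 0 1 zero_le_one x).2
  refine Measure.ext_of_Ico_finite κ₁ κ₂ ?_ fun a b hab => ?_
  · have h_one := h 1 (right_mem_Icc.2 zero_le_one)
    rwa [← univ_inter (Ico 0 1), measure_inter_conull h₁, measure_inter_conull h₂] at h_one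
  · rw [← Iio_sdiff_Iio, measure_sdiff (Iio_subset_Iio hab.le) nullMeasurableSet_Iio
      (measure_ne_top _ _), measure_sdiff (Iio_subset_Iio hab.le) nullMeasurableSet_Iio
      (measure_ne_top _ _), hIio, hIio]

end Measure

/-- μ is invariant under the p-adic transformation iff its
distribution function φ(x) = μ([0,x)) satisfies the functional equation
φ(x) = Σ_{k=0}^{p-1} [φ((x+k)/p) - φ(k/p)] on [0,1]. -/
theorem stmt2 (p : ℕ) (hp : 2 ≤ p)
    (μ : Measure ℝ) [IsProbabilityMeasure μ]
    (hsupp : μ (Set.Ico (0:ℝ) 1) = 1)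
    (φ : ℝ → ℝ)
    (hφ : ∀ x ∈ Set.Icc (0:ℝ) 1, φ x = (μ (Set.Ico (0:ℝ) x)).toReal) :
    (∀ B : Set ℝ, MeasurableSet B →
      μ ((fun y => Int.fract ((p : ℝ) * y)) ⁻¹' B) = μ B)
    ↔ ∀ x ∈ Set.Icc (0:ℝ) 1,
        φ x = ∑ k ∈ Finset.range p, (φ ((x + k) / p) - φ ((k : ℝ) / p)) := by
  set T := fun y : ℝ => Int.fract ((p : ℝ) * y)
  have hp₀ : 0 < p := by omega
  have hT : Measurable T := (measurable_const_mul _).fract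
  have hμ : μ (Ico 0 1)ᶜ = 0 := (prob_compl_eq_zero_iff measurableSet_Ico).2 hsupp
  have hsum : ∀ x ∈ Icc (0 : ℝ) 1,
      ∑ k ∈ Finset.range p, (φ ((x + k) / p) - φ ((k : ℝ) / p)) = μ.real (T ⁻¹' Ico 0 x) := by
    intro x hx
    rw [measureReal_preimage_fract_mul_Ico hμ hp₀ hx]
    refine Finset.sum_congr rfl fun k hk => ?_
    have hk := Finset.mem_range.1 hk
    rw [hφ _ (add_div_mem_Icc hp₀ hk hx),
      hφ _ (by simpa using add_div_mem_Icc hp₀ hk (left_mem_Icc.2 zero_le_one)), measureReal_def,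
      measureReal_def]
  refine ⟨fun hinv x hx => ?_, fun hfun => ?_⟩
  · rw [hsum x hx, hφ x hx, measureReal_def, hinv _ measurableSet_Ico]
  · have hmap : μ.map T = μ := by
      refine Measure.ext_of_Ico_zero ?_ hμ fun x hx => ?_
      · rw [Measure.map_apply hT measurableSet_Ico.compl, ← measure_empty (μ := μ)]
        congr 1
        ext y
        simp [T, Int.fract_nonneg, Int.fract_lt_one]
      · rw [Measure.map_apply hT measurableSet_Ico, ← measureReal_eq_measureReal_iff,
          ← hsum x hx, ← hfun x hx, hφ x hx, measureReal_def]
    intro B hB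
    rw [← Measure.map_apply hT hB, hmap]
end

section
/- Let p ≥ 2 be an integer. If φ : [0,1] → [0,1] is non-decreasing, absolutely continuous, with φ(0) = 0 and φ(1) = 1, and T is the operator Tφ(x) = Σ_{k=0}^{p−1}[φ((x+k)/p) − φ(k/p)], then lim_{m→∞} (T^m φ)(x) = x for every x ∈ [0,1]. -/
/-- The transfer-type operator associated with the p-adic transformation. -/
noncomputable def padicT (p : ℕ) (φ : ℝ → ℝ) : ℝ → ℝ :=
  fun x => ∑ k ∈ Finset.range p, (φ ((x + k) / p) - φ ((k : ℝ) / p))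

/-!
Unwinding the operator, `T^m φ x = ∑_{j < N} (φ ((x + j) / N) - φ (j / N))` with `N = p ^ m`.
Writing `φ = ∫₀ g`, this is the integral of `g` over the `N` stripes `[j / N, (j + x) / N]`,
which fill the proportion `x` of every cell `[j / N, (j + 1) / N]`. For continuous `g` the sum
is therefore within `2x · (oscillation of g on a cell)` of `x ∫₀¹ g`. In general, the error
`∑_j ∫_{stripe j} g - x ∫₀¹ g` is linear in `g` and bounded by `2 ‖g‖₁`, and continuous
functions are dense in `L¹[0, 1]`. Finally `∫₀¹ g = φ 1 = 1`.
-/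

open Set Filter Topology MeasureTheory intervalIntegral

theorem Finset.sum_range_mul_eq_sum_sum {M : Type*} [AddCommMonoid M] (f : ℕ → M) (a b : ℕ) :
    ∑ i ∈ range (a * b), f i = ∑ k ∈ range b, ∑ j ∈ range a, f (a * k + j) := by
  induction b with
  | zero => simp
  | succ b ih => rw [mul_add_one, sum_range_add, ih, sum_range_succ]

theorem padicT_iterate_apply {p : ℕ} (hp : p ≠ 0) {φ : ℝ → ℝ} (h0 : φ 0 = 0) (m : ℕ)
    (x : ℝ) :
    (padicT p)^[m] φ x =
      ∑ j ∈ Finset.range (p ^ m), (φ ((x + j) / (p ^ m : ℕ)) - φ (j / (p ^ m : ℕ))) := by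
  induction m generalizing x with
  | zero => simp [h0]
  | succ m ih =>
    simp only [Function.iterate_succ_apply', padicT, ih, ← Finset.sum_sub_distrib]
    rw [Finset.sum_comm, pow_succ', Finset.sum_range_mul_eq_sum_sum]
    refine Finset.sum_congr rfl fun j _ => Finset.sum_congr rfl fun k _ => ?_
    have : (p : ℝ) ≠ 0 := by exact_mod_cast hp
    push_cast
    field_simp
    ring_nf

theorem MeasureTheory.IntegrableOn.intervalIntegrable_of_mem_Icc {g : ℝ → ℝ} {a b c d : ℝ}
    (hg : IntegrableOn g (Icc a b)) (hc : c ∈ Icc a b) (hd : d ∈ Icc a b) :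
    IntervalIntegrable g volume c d :=
  (hg.mono_set (uIcc_subset_Icc hc hd)).intervalIntegrable

theorem MeasureTheory.IntegrableOn.exists_continuous_intervalIntegral_abs_sub_le {g : ℝ → ℝ}
    {a b : ℝ} (hab : a ≤ b) (hg : IntegrableOn g (Icc a b)) {ε : ℝ} (hε : 0 < ε) :
    ∃ h : ℝ → ℝ, Continuous h ∧ ∫ t in a..b, |g t - h t| ≤ ε := by
  obtain ⟨h, hgh, -⟩ := Integrable.exists_boundedContinuous_integral_sub_le hg hε
  refine ⟨h, h.continuous, ?_⟩
  rwa [intervalIntegral.integral_of_le hab, ← integral_Icc_eq_integral_Ioc]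

theorem abs_integral_sub_mul_le {h : ℝ → ℝ} {a b ε : ℝ} (hab : a ≤ b)
    (hint : IntervalIntegrable h volume a b) (hclose : ∀ t ∈ Ioc a b, |h t - h a| ≤ ε) :
    |(∫ t in a..b, h t) - (b - a) * h a| ≤ ε * (b - a) := by
  have : (∫ t in a..b, h t) - (b - a) * h a = ∫ t in a..b, (h t - h a) := by
    rw [integral_sub hint intervalIntegrable_const, intervalIntegral.integral_const, smul_eq_mul]
  rw [this, ← abs_of_nonneg (sub_nonneg.2 hab)]
  exact intervalIntegral.norm_integral_le_of_norm_le_const (f := fun t => h t - h a)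
    fun t ht => hclose t (by rwa [uIoc_of_le hab] at ht)

theorem abs_integral_sub_mul_integral_le {h : ℝ → ℝ} {a b c x ε : ℝ} (hx : x ∈ Icc 0 1)
    (hac : a ≤ c) (hb : b - a = x * (c - a)) (hint : IntervalIntegrable h volume a c)
    (hclose : ∀ t ∈ Ioc a c, |h t - h a| ≤ ε) :
    |(∫ t in a..b, h t) - x * ∫ t in a..c, h t| ≤ 2 * x * ε * (c - a) := by
  have hab : a ≤ b := by nlinarith [hx.1]
  have hbc : b ≤ c := by nlinarith [hx.2]
  have hb' := abs_integral_sub_mul_le hab (hint.mono_set (uIcc_subset_uIcc_left (by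
    rw [uIcc_of_le hac]; exact ⟨hab, hbc⟩))) fun t ht => hclose t ⟨ht.1, ht.2.trans hbc⟩
  have hc' := abs_integral_sub_mul_le hac hint hclose
  calc |(∫ t in a..b, h t) - x * ∫ t in a..c, h t|
      = |((∫ t in a..b, h t) - (b - a) * h a) - x * ((∫ t in a..c, h t) - (c - a) * h a)| := by
        rw [hb]; ring_nf
    _ ≤ ε * (b - a) + x * (ε * (c - a)) := by
        refine (abs_sub _ _).trans (add_le_add hb' ?_)
        rw [abs_mul, abs_of_nonneg hx.1]
        exact mul_le_mul_of_nonneg_left hc' hx.1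
    _ = 2 * x * ε * (c - a) := by rw [hb]; ring

noncomputable def stripeSum (g : ℝ → ℝ) (x : ℝ) (N : ℕ) : ℝ :=
  ∑ j ∈ Finset.range N, ∫ t in (j / N : ℝ)..((x + j) / N), g t

theorem stripe_mem_Icc {x : ℝ} (hx : x ∈ Icc 0 1) {j N : ℕ} (hj : j < N) :
    (x + j) / N ∈ Icc (0 : ℝ) 1 := by
  have hN : (j : ℝ) + 1 ≤ N := by exact_mod_cast hj
  constructor
  · exact div_nonneg (by linarith [hx.1, j.cast_nonneg (α := ℝ)]) (N.cast_nonneg)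
  · rw [div_le_one (by linarith [j.cast_nonneg (α := ℝ)])]
    linarith [hx.2]

theorem stripe_left_mem_Icc {j N : ℕ} (hj : j < N) : (j / N : ℝ) ∈ Icc (0 : ℝ) 1 := by
  simpa using stripe_mem_Icc (left_mem_Icc.2 zero_le_one) hj

theorem stripe_left_le {x : ℝ} (hx : 0 ≤ x) (j N : ℕ) : (j / N : ℝ) ≤ (x + j) / N :=
  div_le_div_of_nonneg_right (by linarith) N.cast_nonneg

theorem stripe_le_stripe_one {x : ℝ} (hx : x ≤ 1) (j N : ℕ) : (x + j) / N ≤ (1 + j) / N :=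
  div_le_div_of_nonneg_right (by linarith) N.cast_nonneg

theorem stripeSum_one {g : ℝ → ℝ} (hg : IntegrableOn g (Icc 0 1)) {N : ℕ} (hN : N ≠ 0) :
    stripeSum g 1 N = ∫ t in 0..1, g t := by
  have hint : ∀ j < N, IntervalIntegrable g volume (j / N : ℝ) ((j + 1 : ℕ) / N : ℝ) :=
    fun j hj => hg.intervalIntegrable_of_mem_Icc (stripe_left_mem_Icc hj)
      (by simpa [add_comm] using stripe_mem_Icc (right_mem_Icc.2 zero_le_one) hj)
  have := sum_integral_adjacent_intervals hint
  simp only [Nat.cast_zero, zero_div, div_self (Nat.cast_ne_zero.2 hN : (N : ℝ) ≠ 0)] at this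
  rw [← this, stripeSum]
  refine Finset.sum_congr rfl fun j _ => ?_
  push_cast
  rw [add_comm]

theorem stripeSum_sub {g h : ℝ → ℝ} (hg : IntegrableOn g (Icc 0 1)) (hh : IntegrableOn h (Icc 0 1))
    {x : ℝ} (hx : x ∈ Icc 0 1) (N : ℕ) :
    stripeSum (fun t => g t - h t) x N = stripeSum g x N - stripeSum h x N := by
  rw [stripeSum, stripeSum, stripeSum, ← Finset.sum_sub_distrib]
  refine Finset.sum_congr rfl fun j hj => ?_
  have hj := Finset.mem_range.1 hj
  exact integral_sub
    (hg.intervalIntegrable_of_mem_Icc (stripe_left_mem_Icc hj) (stripe_mem_Icc hx hj))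
    (hh.intervalIntegrable_of_mem_Icc (stripe_left_mem_Icc hj) (stripe_mem_Icc hx hj))

theorem abs_stripeSum_le {u : ℝ → ℝ} (hu : IntegrableOn u (Icc 0 1)) {x : ℝ} (hx : x ∈ Icc 0 1)
    {N : ℕ} (hN : N ≠ 0) : |stripeSum u x N| ≤ ∫ t in 0..1, |u t| := by
  have hu' : IntegrableOn (fun t => |u t|) (Icc 0 1) := hu.abs
  calc |stripeSum u x N| ≤ ∑ j ∈ Finset.range N, ∫ t in (j / N : ℝ)..((x + j) / N), |u t| := by
        refine (Finset.abs_sum_le_sum_abs _ _).trans (Finset.sum_le_sum fun j _ => ?_)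
        exact abs_integral_le_integral_abs (stripe_left_le hx.1 j N)
    _ ≤ stripeSum (fun t => |u t|) 1 N := by
        refine Finset.sum_le_sum fun j hj => ?_
        have hj := Finset.mem_range.1 hj
        exact integral_mono_interval le_rfl (stripe_left_le hx.1 j N)
          (stripe_le_stripe_one hx.2 j N)
          (Eventually.of_forall fun t => abs_nonneg _)
          (hu'.intervalIntegrable_of_mem_Icc (stripe_left_mem_Icc hj)
            (stripe_mem_Icc (right_mem_Icc.2 zero_le_one) hj))
    _ = ∫ t in 0..1, |u t| := stripeSum_one hu' hN

theorem abs_stripeSum_sub_mul_integral_le {u : ℝ → ℝ} (hu : IntegrableOn u (Icc 0 1)) {x : ℝ}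
    (hx : x ∈ Icc 0 1) {N : ℕ} (hN : N ≠ 0) :
    |stripeSum u x N - x * ∫ t in 0..1, u t| ≤ 2 * ∫ t in 0..1, |u t| := by
  have habs : |∫ t in 0..1, u t| ≤ ∫ t in 0..1, |u t| := abs_integral_le_integral_abs zero_le_one
  calc |stripeSum u x N - x * ∫ t in 0..1, u t|
      ≤ |stripeSum u x N| + x * |∫ t in 0..1, u t| := by
        rw [← abs_of_nonneg hx.1, ← abs_mul, abs_of_nonneg hx.1]
        exact abs_sub _ _
    _ ≤ 2 * ∫ t in 0..1, |u t| := by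
        nlinarith [abs_stripeSum_le hu hx hN, hx.2, abs_nonneg (∫ t in 0..1, u t)]

theorem tendsto_stripeSum_of_continuousOn {h : ℝ → ℝ} (hh : ContinuousOn h (Icc 0 1)) {x : ℝ}
    (hx : x ∈ Icc 0 1) : Tendsto (stripeSum h x) atTop (𝓝 (x * ∫ t in 0..1, h t)) := by
  rw [Metric.tendsto_atTop]
  intro ε hε
  obtain ⟨δ, hδ, hclose⟩ := Metric.uniformContinuousOn_iff.1
    (isCompact_Icc.uniformContinuousOn_of_continuous hh) (ε / 4) (by positivity)
  obtain ⟨N₀, hN₀⟩ := exists_nat_one_div_lt hδ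
  refine ⟨N₀ + 1, fun N hN => ?_⟩
  have hNpos : (0 : ℝ) < N := by exact_mod_cast (show 0 < N by omega)
  have hNδ : 1 / (N : ℝ) < δ :=
    lt_of_le_of_lt (one_div_le_one_div_of_le (by positivity) (by exact_mod_cast hN)) hN₀
  have hstripe : ∀ j ∈ Finset.range N,
      |(∫ t in (j / N : ℝ)..((x + j) / N), h t) - x * ∫ t in (j / N : ℝ)..((1 + j) / N), h t|
        ≤ 2 * x * (ε / 4) * (1 / N) := by
    intro j hj
    have hj := Finset.mem_range.1 hj
    have hlen : (1 + j) / N - j / N = 1 / (N : ℝ) := by field_simp; ring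
    rw [← hlen]
    refine abs_integral_sub_mul_integral_le hx (stripe_left_le zero_le_one j N)
      (by field_simp; ring) ((hh.integrableOn_Icc).intervalIntegrable_of_mem_Icc
        (stripe_left_mem_Icc hj) (stripe_mem_Icc (right_mem_Icc.2 zero_le_one) hj)) ?_
    intro t ht
    have htI : t ∈ Icc (0 : ℝ) 1 := ⟨(stripe_left_mem_Icc hj).1.trans ht.1.le,
      ht.2.trans (stripe_mem_Icc (right_mem_Icc.2 zero_le_one) hj).2⟩
    rw [← Real.dist_eq]
    refine (hclose t htI _ (stripe_left_mem_Icc hj) ?_).le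
    rw [Real.dist_eq, abs_of_pos (sub_pos.2 ht.1)]
    linarith [ht.2]
  rw [Real.dist_eq, ← stripeSum_one hh.integrableOn_Icc (by omega : N ≠ 0), stripeSum, stripeSum,
    Finset.mul_sum, ← Finset.sum_sub_distrib]
  calc _ ≤ _ := Finset.abs_sum_le_sum_abs _ _
    _ ≤ ∑ _j ∈ Finset.range N, 2 * x * (ε / 4) * (1 / N) := Finset.sum_le_sum hstripe
    _ = x * (ε / 2) := by rw [Finset.sum_const, Finset.card_range, nsmul_eq_mul]; field_simp; ring
    _ < ε := by nlinarith [hx.1, hx.2]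

theorem tendsto_stripeSum {g : ℝ → ℝ} (hg : IntegrableOn g (Icc 0 1)) {x : ℝ}
    (hx : x ∈ Icc 0 1) : Tendsto (stripeSum g x) atTop (𝓝 (x * ∫ t in 0..1, g t)) := by
  rw [Metric.tendsto_atTop]
  intro ε hε
  obtain ⟨h, hcont, hgh⟩ := hg.exists_continuous_intervalIntegral_abs_sub_le zero_le_one
    (by positivity : 0 < ε / 4)
  have hh : IntegrableOn h (Icc 0 1) := hcont.continuousOn.integrableOn_Icc
  obtain ⟨N₀, hN₀⟩ := Metric.tendsto_atTop.1
    (tendsto_stripeSum_of_continuousOn hcont.continuousOn hx) (ε / 2) (by positivity)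
  refine ⟨N₀ + 1, fun N hN => ?_⟩
  have happrox := abs_stripeSum_sub_mul_integral_le
    (u := fun t => g t - h t) (hg.sub hh) hx (by omega : N ≠ 0)
  rw [stripeSum_sub hg hh hx, integral_sub (hg.intervalIntegrable_of_mem_Icc
    (left_mem_Icc.2 zero_le_one) (right_mem_Icc.2 zero_le_one)) (hh.intervalIntegrable_of_mem_Icc
    (left_mem_Icc.2 zero_le_one) (right_mem_Icc.2 zero_le_one))] at happrox
  have hcont_close := hN₀ N (by omega)
  rw [Real.dist_eq, abs_lt] at hcont_close ⊢
  rw [mul_sub, abs_le] at happrox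
  constructor <;> linarith

theorem sum_sub_eq_stripeSum {φ g : ℝ → ℝ} (hg : IntegrableOn g (Icc 0 1))
    (hφ : ∀ y ∈ Icc (0 : ℝ) 1, φ y = ∫ t in 0..y, g t) {x : ℝ} (hx : x ∈ Icc 0 1) (N : ℕ) :
    ∑ j ∈ Finset.range N, (φ ((x + j) / N) - φ (j / N)) = stripeSum g x N := by
  refine Finset.sum_congr rfl fun j hj => ?_
  have hj := Finset.mem_range.1 hj
  rw [hφ _ (stripe_mem_Icc hx hj), hφ _ (stripe_left_mem_Icc hj)]
  exact integral_interval_sub_left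
    (hg.intervalIntegrable_of_mem_Icc (left_mem_Icc.2 zero_le_one) (stripe_mem_Icc hx hj))
    (hg.intervalIntegrable_of_mem_Icc (left_mem_Icc.2 zero_le_one) (stripe_left_mem_Icc hj))

theorem stmt5_general (p : ℕ) (hp : 2 ≤ p) (φ : ℝ → ℝ)
    (h1 : φ 1 = 1)
    (hac : ∃ g : ℝ → ℝ, MeasureTheory.IntegrableOn g (Set.Icc 0 1) ∧
      ∀ x ∈ Set.Icc (0:ℝ) 1, φ x = ∫ t in (0:ℝ)..x, g t) :
    ∀ x ∈ Set.Icc (0:ℝ) 1,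
      Filter.Tendsto (fun m : ℕ => (padicT p)^[m] φ x) Filter.atTop (nhds x) := by
  obtain ⟨g, hg, hφ⟩ := hac
  intro x hx
  have h0 : φ 0 = 0 := by simpa using hφ 0 (left_mem_Icc.2 zero_le_one)
  have hg1 : ∫ t in (0 : ℝ)..1, g t = 1 := by rw [← hφ 1 (right_mem_Icc.2 zero_le_one), h1]
  have hlim := (tendsto_stripeSum hg hx).comp
    (tendsto_pow_atTop_atTop_of_one_lt (by omega : 1 < p))
  rw [hg1, mul_one] at hlim
  refine hlim.congr fun m => ?_
  rw [Function.comp_apply, padicT_iterate_apply (by omega) h0, sum_sub_eq_stripeSum hg hφ hx]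

/-- if φ : [0,1] → [0,1] is non-decreasing, absolutely continuous
(i.e. an indefinite integral of an integrable function), with φ(0)=0, φ(1)=1,
then T^m φ converges pointwise to the identity on [0,1]. -/
theorem stmt5 (p : ℕ) (hp : 2 ≤ p) (φ : ℝ → ℝ)
    (hmono : MonotoneOn φ (Set.Icc 0 1))
    (hrange : ∀ x ∈ Set.Icc (0:ℝ) 1, φ x ∈ Set.Icc (0:ℝ) 1)
    (h0 : φ 0 = 0) (h1 : φ 1 = 1)
    (hac : ∃ g : ℝ → ℝ, MeasureTheory.IntegrableOn g (Set.Icc 0 1) ∧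
      ∀ x ∈ Set.Icc (0:ℝ) 1, φ x = ∫ t in (0:ℝ)..x, g t) :
    ∀ x ∈ Set.Icc (0:ℝ) 1,
      Filter.Tendsto (fun m : ℕ => (padicT p)^[m] φ x) Filter.atTop (nhds x) :=
  stmt5_general p hp φ h1 hac
end

section
/- Let p ≥ 2 and D = ⋃_{m∈ℕ} { i/(p^m − 1) : i ∈ {0, …, p^m − 2} }. For every x ∈ [0,1], the set D ∩ { (x+k)/p : k ∈ {0, …, p−1} } has at most one element, and it has exactly one element if and only if x ∈ D. -/
/-!
`D` is the set of `x ∈ [0, 1)` with `x * (p ^ m - 1) ∈ ℤ` for some `m ≥ 1`, i.e. with a purely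
periodic base-`p` expansion. If `x * (p ^ m - 1) = J`, then `y = (x + k) / p` satisfies
`p * y * (p ^ m - 1) = J + k * (p ^ m - 1)`, so `y * (p ^ m - 1)` is an integer exactly when
`k ≡ J [ZMOD p]`. Passing to a common multiple of two periods, at most one digit `k < p` can work,
and such a digit exists precisely when `x` itself has a period; `x = 1` is excluded because it
forces `p ∣ k + 1`, i.e. `y = 1`.
-/

/-- The set D = ⋃_{m≥1} { i/(p^m - 1) : 0 ≤ i ≤ p^m - 2 }. -/
def padicD (p : ℕ) : Set ℝ :=
  {x | ∃ m : ℕ, 1 ≤ m ∧ ∃ i : ℕ, i ≤ p ^ m - 2 ∧ x = (i : ℝ) / ((p : ℝ) ^ m - 1)}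

theorem exists_intCast_eq_div_iff {K : Type*} [Field K] [CharZero K] {a b : ℤ} (hb : b ≠ 0) :
    (∃ n : ℤ, (a : K) / b = n) ↔ b ∣ a := by
  have hb' : (b : K) ≠ 0 := Int.cast_ne_zero.2 hb
  constructor
  · rintro ⟨n, hn⟩
    refine ⟨n, Int.cast_injective (α := K) ?_⟩
    push_cast
    rw [← hn, mul_div_cancel₀ _ hb']
  · rintro ⟨c, rfl⟩
    exact ⟨c, by push_cast; field_simp⟩

/-- `x * (p ^ m - 1) ∈ ℤ`: for `x ∈ [0, 1)` this says that the base-`p` expansion of `x` is purely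
periodic with period `m`. -/
def HasPeriod (p m : ℕ) (x : ℝ) : Prop :=
  ∃ n : ℤ, x * ((p : ℝ) ^ m - 1) = n

section HasPeriod

variable {p m : ℕ} {x : ℝ}

theorem HasPeriod.mul (h : HasPeriod p m x) (q : ℕ) : HasPeriod p (m * q) x := by
  obtain ⟨n, hn⟩ := h
  obtain ⟨c, hc⟩ := pow_one_sub_dvd_pow_mul_sub_one (p : ℤ) m q
  have hc' : (p : ℝ) ^ (m * q) - 1 = ((p : ℝ) ^ m - 1) * c := by exact_mod_cast hc
  exact ⟨n * c, by rw [hc', ← mul_assoc, hn]; push_cast; ring⟩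

theorem HasPeriod.of_div_add (hp : p ≠ 0) {k : ℤ} (h : HasPeriod p m ((x + k) / p)) :
    HasPeriod p m x := by
  obtain ⟨n, hn⟩ := h
  refine ⟨p * n - k * (p ^ m - 1), ?_⟩
  rw [div_mul_eq_mul_div, div_eq_iff (Nat.cast_ne_zero.2 hp)] at hn
  push_cast
  linear_combination hn

theorem hasPeriod_div_add_iff (hp : p ≠ 0) (hm : m ≠ 0) {J : ℤ}
    (hJ : x * ((p : ℝ) ^ m - 1) = J) (k : ℤ) :
    HasPeriod p m ((x + k) / p) ↔ k ≡ J [ZMOD p] := by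
  have hp' : (p : ℤ) ≠ 0 := Int.natCast_ne_zero.2 hp
  have hshift :
      (x + k) / p * ((p : ℝ) ^ m - 1) = ((J + k * ((p : ℤ) ^ m - 1) : ℤ) : ℝ) / (p : ℤ) := by
    push_cast
    rw [← hJ]
    ring
  rw [HasPeriod, hshift, exists_intCast_eq_div_iff hp', Int.modEq_iff_dvd,
    show J + k * ((p : ℤ) ^ m - 1) = (J - k) + p * (k * p ^ (m - 1)) by
      rw [← mul_pow_sub_one hm]; ring,
    dvd_add_left (dvd_mul_right _ _)]

end HasPeriod

section padicD

variable {p : ℕ} {x : ℝ}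

theorem mem_padicD_iff (hp : 1 < p) :
    x ∈ padicD p ↔ x ∈ Set.Ico 0 1 ∧ ∃ m, 1 ≤ m ∧ HasPeriod p m x := by
  have hden {m : ℕ} (hm : 1 ≤ m) : 2 ≤ p ^ m := (Nat.le_self_pow (by omega) p).trans' hp
  constructor
  · rintro ⟨m, hm, i, hi, rfl⟩
    have hi' : (i : ℝ) + 1 ≤ (p : ℝ) ^ m - 1 := by
      have : i + 2 ≤ p ^ m := by have := hden hm; omega
      have : (i : ℝ) + 2 ≤ (p : ℝ) ^ m := by exact_mod_cast this
      linarith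
    have hpos : (0 : ℝ) < (p : ℝ) ^ m - 1 := by linarith [i.cast_nonneg (α := ℝ)]
    exact ⟨⟨by positivity, (div_lt_one hpos).2 (by linarith)⟩, m, hm, i,
      div_mul_cancel₀ _ hpos.ne'⟩
  · rintro ⟨⟨hx0, hx1⟩, m, hm, n, hn⟩
    have hpos : (0 : ℝ) < (p : ℝ) ^ m - 1 := by
      have : (2 : ℝ) ≤ (p : ℝ) ^ m := by exact_mod_cast hden hm
      linarith
    have hn0 : (0 : ℝ) ≤ n := hn ▸ mul_nonneg hx0 hpos.le
    have hn1 : (n : ℝ) < (p : ℝ) ^ m - 1 := hn ▸ mul_lt_of_lt_one_left hpos hx1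
    have hn0' : 0 ≤ n := by exact_mod_cast hn0
    have hn1' : n < (p : ℤ) ^ m - 1 := by exact_mod_cast hn1
    refine ⟨m, hm, n.toNat, ?_, ?_⟩
    · have := hden hm
      zify [this]
      omega
    · rw [eq_div_iff hpos.ne', hn, ← Int.cast_natCast, Int.toNat_of_nonneg hn0']

theorem eq_of_div_add_mem_padicD (hp : 1 < p) {k₁ k₂ : ℕ} (hk₁ : k₁ < p) (hk₂ : k₂ < p)
    (h₁ : (x + k₁) / p ∈ padicD p) (h₂ : (x + k₂) / p ∈ padicD p) : k₁ = k₂ := by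
  obtain ⟨-, m₁, hm₁, h₁⟩ := (mem_padicD_iff hp).1 h₁
  obtain ⟨-, m₂, hm₂, h₂⟩ := (mem_padicD_iff hp).1 h₂
  rw [← Int.cast_natCast k₁] at h₁
  rw [← Int.cast_natCast k₂] at h₂
  replace h₁ := h₁.mul m₂
  replace h₂ := mul_comm m₂ m₁ ▸ h₂.mul m₁
  have hM : m₁ * m₂ ≠ 0 := Nat.mul_ne_zero (by omega) (by omega)
  obtain ⟨J, hJ⟩ := h₁.of_div_add (by omega)
  have hk : (k₁ : ℤ) ≡ k₂ [ZMOD p] :=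
    ((hasPeriod_div_add_iff (by omega) hM hJ _).1 h₁).trans
      ((hasPeriod_div_add_iff (by omega) hM hJ _).1 h₂).symm
  exact (Int.natCast_modEq_iff.1 hk).eq_of_lt_of_lt hk₁ hk₂

theorem mem_padicD_of_div_add_mem (hp : 1 < p) (hx : x ∈ Set.Icc 0 1) {k : ℕ}
    (h : (x + k) / p ∈ padicD p) : x ∈ padicD p := by
  obtain ⟨⟨-, hy⟩, m, hm, hper⟩ := (mem_padicD_iff hp).1 h
  rw [← Int.cast_natCast k] at hper
  refine (mem_padicD_iff hp).2 ⟨⟨hx.1, hx.2.lt_of_ne ?_⟩, m, hm, hper.of_div_add (by omega)⟩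
  rintro rfl
  have hk : k + 1 < p := by
    rw [div_lt_one (by positivity)] at hy
    exact_mod_cast (by linarith : (k : ℝ) + 1 < p)
  have hJ : (1 : ℝ) * ((p : ℝ) ^ m - 1) = ((p ^ m - 1 : ℤ) : ℝ) := by push_cast; ring
  have hdvd : (p : ℤ) ∣ k + 1 := by
    have hmod := ((hasPeriod_div_add_iff (by omega) (by omega) hJ k).1 hper).dvd
    have hsub := dvd_sub (dvd_pow_self (p : ℤ) (by omega : m ≠ 0)) hmod
    rwa [show (p : ℤ) ^ m - ((p : ℤ) ^ m - 1 - k) = k + 1 by ring] at hsub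
  have := Nat.eq_zero_of_dvd_of_lt (by exact_mod_cast hdvd) hk
  omega

theorem exists_div_add_mem_padicD (hp : 1 < p) (hx : x ∈ padicD p) :
    ∃ k < p, (x + k) / p ∈ padicD p := by
  obtain ⟨⟨hx0, hx1⟩, m, hm, J, hJ⟩ := (mem_padicD_iff hp).1 hx
  have hp' : (0 : ℤ) < p := by omega
  set k := (J % p).toNat
  have hk : (k : ℤ) = J % p := Int.toNat_of_nonneg (Int.emod_nonneg _ hp'.ne')
  have hkp : k < p := by have := Int.emod_lt_of_pos J hp'; omega
  have hper : HasPeriod p m ((x + k) / p) := by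
    rw [← Int.cast_natCast k, hasPeriod_div_add_iff (by omega) (by omega) hJ, hk]
    exact Int.mod_modEq J p
  refine ⟨k, hkp, (mem_padicD_iff hp).2 ⟨⟨by positivity, ?_⟩, m, hm, hper⟩⟩
  rw [div_lt_one (by positivity)]
  have : (k : ℝ) + 1 ≤ p := by exact_mod_cast hkp
  linarith

end padicD

/-- for every x ∈ [0,1], the set D ∩ {(x+k)/p : 0 ≤ k ≤ p-1} has
at most one element, and it is nonempty iff x ∈ D. -/
theorem stmt7 (p : ℕ) (hp : 2 ≤ p) (x : ℝ) (hx : x ∈ Set.Icc (0:ℝ) 1) :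
    (padicD p ∩ {y | ∃ k : ℕ, k < p ∧ y = (x + k) / p}).Subsingleton ∧
    ((padicD p ∩ {y | ∃ k : ℕ, k < p ∧ y = (x + k) / p}).Nonempty ↔ x ∈ padicD p) := by
  refine ⟨?_, ⟨?_, fun h => ?_⟩⟩
  · rintro _ ⟨h₁, k₁, hk₁, rfl⟩ _ ⟨h₂, k₂, hk₂, rfl⟩
    rw [eq_of_div_add_mem_padicD hp hk₁ hk₂ h₁ h₂]
  · rintro ⟨_, h, k, -, rfl⟩
    exact mem_padicD_of_div_add_mem hp hx h
  · obtain ⟨k, hk, hmem⟩ := exists_div_add_mem_padicD hp h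
    exact ⟨_, hmem, k, hk, rfl⟩
end

section
/- Let p ≥ 2 and l ∈ {0, …, p−2}. The function φ : [0,1] → [0,1] defined by φ(x) = 1 if x > l/(p−1) and φ(x) = 0 otherwise satisfies φ(x) = Σ_{k=0}^{p−1}[φ((x+k)/p) − φ(k/p)] for every x ∈ [0,1]. -/
/-! The point `t = l / (p - 1)` is the fixed point of `y ↦ (y + l) / p`, so `(x + l) / p` lies above
`t` exactly when `x` does. For `k ≠ l` both `(x + k) / p` and `k / p` lie on the same side of `t`
(below it for `k < l`, above it for `k > l`, using `l + 1 < p`), so every term of the sum except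
the `k = l` one vanishes, and that one equals `φ x`. -/

lemma div_sub_one_lt_add_div_iff {p l x : ℝ} (hp : 1 < p) :
    l / (p - 1) < (x + l) / p ↔ l / (p - 1) < x := by
  have hp1 : 0 < p - 1 := by linarith
  have key : (x + l) / p - l / (p - 1) = (x - l / (p - 1)) / p := by
    field_simp
    ring
  rw [← sub_pos, key, div_pos_iff_of_pos_right (by linarith), sub_pos]

lemma div_le_div_sub_one {p l y : ℝ} (hp : 1 < p) (hl : 0 ≤ l) (hy : y ≤ l) :
    y / p ≤ l / (p - 1) :=
  calc y / p ≤ l / p := by gcongr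
    _ ≤ l / (p - 1) := by gcongr; linarith

lemma div_sub_one_lt_div {p l y : ℝ} (hl : 0 ≤ l) (hlp : l + 1 < p) (hy : l + 1 ≤ y) :
    l / (p - 1) < y / p := by
  have hp1 : 0 < p - 1 := by linarith
  calc l / (p - 1) < (l + 1) / p := by
        rw [div_lt_div_iff₀ hp1 (by linarith)]
        nlinarith
    _ ≤ y / p := by gcongr; linarith

/-- for l ∈ {0,…,p-2}, the characteristic function of
(l/(p-1), 1] satisfies the functional equation
φ(x) = Σ_{k=0}^{p-1}[φ((x+k)/p) − φ(k/p)] on [0,1]. -/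
theorem stmt10 (p l : ℕ) (hp : 2 ≤ p) (hl : l ≤ p - 2)
    (φ : ℝ → ℝ)
    (hφ : ∀ x : ℝ, φ x = if (l : ℝ) / ((p : ℝ) - 1) < x then 1 else 0) :
    ∀ x ∈ Set.Icc (0:ℝ) 1,
      φ x = ∑ k ∈ Finset.range p, (φ ((x + k) / p) - φ ((k : ℝ) / p)) := by
  rintro x ⟨hx0, hx1⟩
  have hp1 : (1 : ℝ) < p := by exact_mod_cast hp
  have hlp : (l : ℝ) + 1 < p := by exact_mod_cast (by omega : l + 1 < p)
  have hl0 : (0 : ℝ) ≤ l := l.cast_nonneg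
  rw [Finset.sum_eq_single_of_mem l (Finset.mem_range.mpr (by omega))]
  · simp only [hφ, div_sub_one_lt_add_div_iff hp1,
      (div_le_div_sub_one hp1 hl0 le_rfl).not_gt, if_false, sub_zero]
  · intro k _ hkl
    rcases hkl.lt_or_gt with hkl | hlk
    · have hk : (k : ℝ) + 1 ≤ l := by exact_mod_cast hkl
      simp only [hφ, (div_le_div_sub_one hp1 hl0 (by linarith : x + k ≤ l)).not_gt,
        (div_le_div_sub_one hp1 hl0 (by linarith : (k : ℝ) ≤ l)).not_gt, if_false, sub_self]
    · have hk : (l : ℝ) + 1 ≤ k := by exact_mod_cast hlk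
      simp only [hφ, div_sub_one_lt_div hl0 hlp (by linarith : (l : ℝ) + 1 ≤ x + k),
        div_sub_one_lt_div hl0 hlp hk, if_true, sub_self]
end

section
/- Let p ≥ 2, m ≥ 2, and let y₀ < y₁ < ⋯ < y_{m−1} be the m distinct elements of a set D^m_l = { (l·p^n mod (p^m−1))/(p^m−1) : n ∈ {0, …, m−1} } of cardinality m, where l ∈ {1, …, p^m − 2}, and assume 0 < y₀ and y_{m−1} < 1. Then the function φ(x) = (1/m) Σ_{i=0}^{m−1} χ_{(y_i, 1]}(x) satisfies φ(x) = Σ_{k=0}^{p−1}[φ((x+k)/p) − φ(k/p)] for every x ∈ [0,1]. -/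
/-!
`D^m_l` is the orbit of `l / (p^m - 1)` under `z ↦ fract (p z)`, and this map permutes it because
`p^m ≡ 1 [MOD p^m - 1]`. For `z ∈ [0, 1)` with `p z = q + z'`, the summand
`χ(z < (x + k)/p) - χ(z < k/p)` vanishes for `k ≠ q` and equals `χ(z' < x)` for `k = q`; summing over
`z ∈ D^m_l` and reindexing along the permutation gives `m φ(x)`.
-/

open Finset

theorem sum_range_ite_lt_add_sub_ite_lt {p : ℕ} {z x : ℝ} (hz0 : 0 ≤ z) (hzp : z < p)
    (hx0 : 0 ≤ x) (hx1 : x ≤ 1) :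
    ∑ k ∈ range p, ((if z < x + k then (1 : ℝ) else 0) - if z < k then 1 else 0) =
      if Int.fract z < x then 1 else 0 := by
  set q := ⌊z⌋₊
  have hqz : (q : ℝ) ≤ z := Nat.floor_le hz0
  have hzq : z < q + 1 := Nat.lt_floor_add_one z
  have hfract : Int.fract z = z - q := by
    rw [← Int.self_sub_floor, ← natCast_floor_eq_intCast_floor hz0]
  rw [sum_eq_single_of_mem q (mem_range.2 ((Nat.floor_lt hz0).2 hzp))]
  · rw [if_neg hqz.not_gt, sub_zero, hfract]
    exact if_congr (by constructor <;> intro <;> linarith) rfl rfl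
  · intro k _ hkq
    rcases hkq.lt_or_gt with hk | hk
    · have : (k : ℝ) + 1 ≤ q := by exact_mod_cast hk
      rw [if_neg (by linarith), if_neg (by linarith), sub_zero]
    · have : (q : ℝ) + 1 ≤ k := by exact_mod_cast hk
      rw [if_pos (by linarith), if_pos (by linarith), sub_self]

noncomputable def stepCount (S : Finset ℝ) (x : ℝ) : ℝ := ∑ z ∈ S, if z < x then 1 else 0

theorem sum_range_stepCount_sub {p : ℕ} (hp : 0 < p) {S : Finset ℝ}
    (hS : S.image (fun z : ℝ => Int.fract (p * z)) = S) {x : ℝ} (hx0 : 0 ≤ x) (hx1 : x ≤ 1) :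
    ∑ k ∈ range p, (stepCount S ((x + k) / p) - stepCount S (k / p)) = stepCount S x := by
  have hpR : (0 : ℝ) < p := by exact_mod_cast hp
  have hunit : ∀ z ∈ S, 0 ≤ z ∧ z < 1 := by
    intro z hz
    rw [← hS] at hz
    obtain ⟨w, -, rfl⟩ := mem_image.1 hz
    exact ⟨Int.fract_nonneg _, Int.fract_lt_one _⟩
  have hinj : Set.InjOn (fun z : ℝ => Int.fract (p * z)) S :=
    card_image_iff.1 (congrArg card hS)
  calc ∑ k ∈ range p, (stepCount S ((x + k) / p) - stepCount S (k / p))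
      = ∑ z ∈ S, ∑ k ∈ range p,
          ((if p * z < x + k then (1 : ℝ) else 0) - if p * z < k then 1 else 0) := by
        simp only [stepCount, ← sum_sub_distrib]
        rw [sum_comm]
        refine sum_congr rfl fun z _ => sum_congr rfl fun k _ => ?_
        simp only [lt_div_iff₀ hpR, mul_comm z]
    _ = ∑ z ∈ S, if Int.fract (p * z) < x then 1 else 0 := by
        refine sum_congr rfl fun z hz => ?_
        obtain ⟨hz0, hz1⟩ := hunit z hz
        exact sum_range_ite_lt_add_sub_ite_lt (by positivity) (by nlinarith) hx0 hx1
    _ = stepCount S x := by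
        rw [← sum_image (f := fun w => if w < x then (1 : ℝ) else 0) hinj, hS, stepCount]

noncomputable def orbitPoint (p m l n : ℕ) : ℝ :=
  ((l * p ^ n % (p ^ m - 1) : ℕ) : ℝ) / ((p ^ m - 1 : ℕ) : ℝ)

theorem fract_natCast_mul_mod_div (p a N : ℕ) :
    Int.fract ((p : ℝ) * ((a % N : ℕ) / N)) = ((p * a % N : ℕ) : ℝ) / N := by
  rw [← mul_div_assoc, ← Nat.cast_mul, Int.fract_div_natCast_eq_div_natCast_mod, Nat.mul_mod_mod]

theorem fract_mul_orbitPoint (p m l n : ℕ) :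
    Int.fract (p * orbitPoint p m l n) = orbitPoint p m l (n + 1) := by
  rw [orbitPoint, fract_natCast_mul_mod_div, orbitPoint, pow_succ', mul_left_comm]

theorem orbitPoint_periodic {p : ℕ} (hp : 0 < p) (m l : ℕ) :
    Function.Periodic (orbitPoint p m l) m := by
  intro n
  have : p ^ m ≡ 1 [MOD p ^ m - 1] := Nat.modEq_sub (Nat.one_le_pow _ _ hp)
  simp only [orbitPoint, pow_add]
  rw [← mul_assoc, this.mul_left (l * p ^ n), mul_one]

theorem Function.Periodic.image_range_add_one {α : Type*} [DecidableEq α] {r : ℕ → α} {m : ℕ}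
    (hr : Function.Periodic r m) : (range m).image (fun n => r (n + 1)) = (range m).image r := by
  ext z
  simp only [mem_image, mem_range]
  constructor
  · rintro ⟨n, hn, rfl⟩
    rcases (Nat.add_one_le_of_lt hn).lt_or_eq with h | h
    · exact ⟨n + 1, h, rfl⟩
    · exact ⟨0, by omega, by rw [h, ← hr 0, zero_add]⟩
  · rintro ⟨_ | n, hn, rfl⟩
    · exact ⟨m - 1, by omega, by rw [Nat.sub_add_cancel (by omega), ← hr 0, zero_add]⟩
    · exact ⟨n, by omega, rfl⟩

theorem image_fract_mul_image_orbitPoint {p : ℕ} (hp : 0 < p) (m l : ℕ) :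
    ((range m).image (orbitPoint p m l)).image (fun z : ℝ => Int.fract (p * z)) =
      (range m).image (orbitPoint p m l) := by
  rw [image_image]
  simp only [Function.comp_def, fract_mul_orbitPoint]
  exact (orbitPoint_periodic hp m l).image_range_add_one

theorem stmt13_general (p m l : ℕ) (hp : 2 ≤ p)
    (y : ℕ → ℝ)
    (hmono : ∀ i j, i < j → j < m → y i < y j)
    (henum : {z : ℝ | ∃ i < m, z = y i}
      = {z : ℝ | ∃ n < m, z = ((l * p ^ n % (p ^ m - 1) : ℕ) : ℝ) / ((p : ℝ) ^ m - 1)}) :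
    ∀ x ∈ Set.Icc (0:ℝ) 1,
      (1 / m : ℝ) * ∑ i ∈ Finset.range m, (if y i < x then (1:ℝ) else 0)
        = ∑ k ∈ Finset.range p,
            ((1 / m : ℝ) * ∑ i ∈ Finset.range m,
                (if y i < (x + k) / p then (1:ℝ) else 0)
              - (1 / m : ℝ) * ∑ i ∈ Finset.range m,
                (if y i < (k : ℝ) / p then (1:ℝ) else 0)) := by
  rintro x ⟨hx0, hx1⟩
  have hp0 : 0 < p := by omega
  have hD : (range m).image y = (range m).image (orbitPoint p m l) := by
    have hcast : ((p ^ m - 1 : ℕ) : ℝ) = (p : ℝ) ^ m - 1 := by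
      rw [Nat.cast_sub (Nat.one_le_pow _ _ hp0)]; push_cast; rfl
    apply coe_injective
    simpa [Set.ext_iff, orbitPoint, hcast, eq_comm] using henum
  have hinj : Set.InjOn y (range m) :=
    StrictMonoOn.injOn fun i _ j hj hij => hmono i j hij (mem_range.1 hj)
  have hcount : ∀ t, ∑ i ∈ range m, (if y i < t then (1 : ℝ) else 0)
      = stepCount ((range m).image y) t := fun t => by rw [stepCount, sum_image hinj]
  simp only [hcount, ← mul_sub, ← mul_sum]
  rw [sum_range_stepCount_sub hp0 (hD ▸ image_fract_mul_image_orbitPoint hp0 m l) hx0 hx1]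

/-- if y₀ < ⋯ < y_{m-1} enumerate the m-element set
D^m_l = {(l·p^n mod (p^m-1))/(p^m-1) : n < m} ⊆ (0,1), then
φ(x) = (1/m) Σ_i χ_{(y_i,1]}(x) satisfies the functional equation. -/
theorem stmt13 (p m l : ℕ) (hp : 2 ≤ p) (hm : 2 ≤ m)
    (hl1 : 1 ≤ l) (hl2 : l ≤ p ^ m - 2)
    (y : ℕ → ℝ)
    (hmono : ∀ i j, i < j → j < m → y i < y j)
    (h0 : 0 < y 0) (h1 : y (m - 1) < 1)
    (henum : {z : ℝ | ∃ i < m, z = y i}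
      = {z : ℝ | ∃ n < m, z = ((l * p ^ n % (p ^ m - 1) : ℕ) : ℝ) / ((p : ℝ) ^ m - 1)}) :
    ∀ x ∈ Set.Icc (0:ℝ) 1,
      (1 / m : ℝ) * ∑ i ∈ Finset.range m, (if y i < x then (1:ℝ) else 0)
        = ∑ k ∈ Finset.range p,
            ((1 / m : ℝ) * ∑ i ∈ Finset.range m,
                (if y i < (x + k) / p then (1:ℝ) else 0)
              - (1 / m : ℝ) * ∑ i ∈ Finset.range m,
                (if y i < (k : ℝ) / p then (1:ℝ) else 0)) :=
  stmt13_general p m l hp y hmono henum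
end

section
/- Let p ≥ 2, m ≥ 2, l ∈ {1, …, p^m − 2}, and x ∈ D^m_l := { (l·p^n mod (p^m−1))/(p^m−1) : n ∈ {0, …, m−1} }. Then: (i) there exist unique y ∈ D^m_l and k ∈ {0, …, p−1} with x = (y+k)/p; and (ii) there exist unique z ∈ D^m_l and q ∈ {0, …, p−1} with z = (x+q)/p. -/
/-!
Write `N = p ^ m - 1` and `a j = l p ^ j mod N`, so that `D^m_l = {a j / N}`; since `p ^ m ≡ 1`
modulo `N`, every exponent `j` gives a point of `D^m_l`. After clearing denominators,
`x = (y + k) / p` with `x = a / N`, `y = b / N` becomes `p a = b + k N`. For (i) this is division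
with remainder of `p a` by `N`, and the remainder is `a (j + 1)`. For (ii) the numerator of `z` is
determined modulo `N` because `p` is invertible modulo `N`, and `a (j + m - 1)` has the right
residue.
-/

namespace Nat

theorem eq_and_eq_of_mul_eq_add_mul {p N a a' b q q' : ℕ} (hpN : p.Coprime N)
    (ha : a < N) (ha' : a' < N) (h : p * a = b + q * N) (h' : p * a' = b + q' * N) :
    a = a' ∧ q = q' := by
  have hmod : p * a ≡ p * a' [MOD N] := by
    rw [h, h']
    exact (Nat.add_mul_mod_self_right b q N).trans (Nat.add_mul_mod_self_right b q' N).symm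
  obtain rfl : a = a' := (hmod.cancel_left_of_coprime hpN.symm).eq_of_lt_of_lt ha ha'
  exact ⟨rfl, Nat.eq_of_mul_eq_mul_right (by omega) (Nat.add_left_cancel (h.symm.trans h'))⟩

end Nat

theorem natCast_div_eq_div_add_div_iff {N p a b k : ℕ} (hN : N ≠ 0) (hp : p ≠ 0) :
    (a : ℝ) / N = ((b : ℝ) / N + k) / p ↔ p * a = b + k * N := by
  rw [div_add' _ _ _ (by exact_mod_cast hN), div_div, div_eq_div_iff (by positivity)
    (by positivity)]
  norm_cast
  constructor <;> intro h
  · exact Nat.eq_of_mul_eq_mul_right (Nat.pos_of_ne_zero hN) (by linarith)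
  · rw [← h]; ring

/-- The set `D^m_l`. -/
def orbitSet (p m l : ℕ) : Set ℝ :=
  {z : ℝ | ∃ n < m, z = ((l * p ^ n % (p ^ m - 1) : ℕ) : ℝ) / ((p : ℝ) ^ m - 1)}

def orbitNum (p m l j : ℕ) : ℕ := l * p ^ j % (p ^ m - 1)

section

variable {p m l : ℕ}

theorem orbitNum_succ (j : ℕ) : orbitNum p m l (j + 1) = p * orbitNum p m l j % (p ^ m - 1) := by
  simp only [orbitNum]
  rw [Nat.mul_mod_mod, pow_succ, mul_comm p, mul_assoc]

theorem orbitNum_mod (hp : 0 < p) (j : ℕ) : orbitNum p m l (j % m) = orbitNum p m l j := by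
  have hpm : (p ^ m) ^ (j / m) ≡ 1 [MOD p ^ m - 1] := by
    simpa using (Nat.modEq_sub (Nat.one_le_pow m p hp)).pow (j / m)
  conv_rhs => rw [orbitNum, ← Nat.mod_add_div j m, pow_add, pow_mul]
  have := ((hpm.mul_left (p ^ (j % m))).mul_left l).symm
  rwa [mul_one] at this

theorem orbitNum_lt (hp : 2 ≤ p) (hm : 0 < m) (j : ℕ) : orbitNum p m l j < p ^ m - 1 :=
  Nat.mod_lt _ (Nat.sub_pos_of_lt (Nat.one_lt_pow hm.ne' hp))

theorem coprime_pow_sub_one (hp : 0 < p) (hm : 0 < m) : p.Coprime (p ^ m - 1) :=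
  (((Nat.coprime_self_sub_right (Nat.one_le_pow m p hp)).2
    (Nat.coprime_one_right _)).coprime_dvd_left (dvd_pow_self p hm.ne'))

theorem orbitSet_eq_range (hp : 0 < p) (hm : 0 < m) :
    orbitSet p m l = Set.range fun j ↦ (orbitNum p m l j : ℝ) / (p ^ m - 1 : ℕ) := by
  have hN : ((p ^ m - 1 : ℕ) : ℝ) = (p : ℝ) ^ m - 1 := by
    rw [Nat.cast_sub (Nat.one_le_pow m p hp)]; push_cast; ring
  ext z
  constructor
  · rintro ⟨n, -, rfl⟩
    exact ⟨n, by simp only [hN, orbitNum]⟩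
  · rintro ⟨j, rfl⟩
    exact ⟨j % m, Nat.mod_lt j hm, by rw [hN, ← orbitNum, orbitNum_mod hp]⟩

theorem mul_orbitNum_div_lt (hp : 2 ≤ p) (hm : 0 < m) (j : ℕ) :
    p * orbitNum p m l j / (p ^ m - 1) < p :=
  Nat.div_lt_of_lt_mul
    (by rw [mul_comm]; exact Nat.mul_lt_mul_of_pos_right (orbitNum_lt hp hm j) (by omega))

theorem pos_of_mem_orbitSet {x : ℝ} (hx : x ∈ orbitSet p m l) : 0 < m := by
  obtain ⟨n, hn, -⟩ := hx
  omega

theorem existsUnique_shift_image (hp : 2 ≤ p) {x : ℝ} (hx : x ∈ orbitSet p m l) :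
    ∃! yk : ℝ × ℕ, yk.1 ∈ orbitSet p m l ∧ yk.2 < p ∧ x = (yk.1 + yk.2) / p := by
  have hm := pos_of_mem_orbitSet hx
  have hN : 0 < p ^ m - 1 := Nat.sub_pos_of_lt (Nat.one_lt_pow hm.ne' hp)
  rw [orbitSet_eq_range (by omega) hm] at hx ⊢
  obtain ⟨n, rfl⟩ := hx
  refine ⟨(_, p * orbitNum p m l n / (p ^ m - 1)),
    ⟨⟨n + 1, rfl⟩, mul_orbitNum_div_lt hp hm n, ?_⟩, ?_⟩
  · rw [natCast_div_eq_div_add_div_iff hN.ne' (by omega), orbitNum_succ]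
    exact (Nat.mod_add_div' _ _).symm
  · rintro ⟨_, k⟩ ⟨⟨j, rfl⟩, -, h⟩
    dsimp only at h ⊢
    rw [natCast_div_eq_div_add_div_iff hN.ne' (by omega)] at h
    obtain ⟨hk, hj⟩ : p * orbitNum p m l n / (p ^ m - 1) = k ∧
        p * orbitNum p m l n % (p ^ m - 1) = orbitNum p m l j := (Nat.div_mod_unique hN).2
      ⟨by rw [h, mul_comm k], orbitNum_lt hp hm j⟩
    rw [orbitNum_succ, hj, hk]

theorem existsUnique_shift_preimage (hp : 2 ≤ p) {x : ℝ} (hx : x ∈ orbitSet p m l) :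
    ∃! zq : ℝ × ℕ, zq.1 ∈ orbitSet p m l ∧ zq.2 < p ∧ zq.1 = (x + zq.2) / p := by
  have hm := pos_of_mem_orbitSet hx
  have hN : 0 < p ^ m - 1 := Nat.sub_pos_of_lt (Nat.one_lt_pow hm.ne' hp)
  rw [orbitSet_eq_range (by omega) hm] at hx ⊢
  obtain ⟨n, rfl⟩ := hx
  set j := n + m - 1
  have hj : p * orbitNum p m l j =
      orbitNum p m l n + p * orbitNum p m l j / (p ^ m - 1) * (p ^ m - 1) := by
    rw [← orbitNum_mod (by omega) n, ← Nat.add_mod_right, show n + m = j + 1 by omega,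
      orbitNum_mod (by omega), orbitNum_succ, Nat.mod_add_div']
  refine ⟨(_, p * orbitNum p m l j / (p ^ m - 1)),
    ⟨⟨j, rfl⟩, mul_orbitNum_div_lt hp hm j, ?_⟩, ?_⟩
  · rwa [natCast_div_eq_div_add_div_iff hN.ne' (by omega)]
  · rintro ⟨_, q⟩ ⟨⟨i, rfl⟩, -, h⟩
    dsimp only at h ⊢
    rw [natCast_div_eq_div_add_div_iff hN.ne' (by omega)] at h
    obtain ⟨hij, hq⟩ := Nat.eq_and_eq_of_mul_eq_add_mul (coprime_pow_sub_one (by omega) hm)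
      (orbitNum_lt hp hm i) (orbitNum_lt hp hm j) h hj
    rw [hij, hq]

end

theorem stmt17_general (p m l : ℕ) (hp : 2 ≤ p)
    (x : ℝ)
    (hx : x ∈ {z : ℝ | ∃ n < m,
      z = ((l * p ^ n % (p ^ m - 1) : ℕ) : ℝ) / ((p : ℝ) ^ m - 1)}) :
    (∃! yk : ℝ × ℕ,
      yk.1 ∈ {z : ℝ | ∃ n < m,
          z = ((l * p ^ n % (p ^ m - 1) : ℕ) : ℝ) / ((p : ℝ) ^ m - 1)} ∧
        yk.2 < p ∧ x = (yk.1 + yk.2) / p) ∧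
    (∃! zq : ℝ × ℕ,
      zq.1 ∈ {z : ℝ | ∃ n < m,
          z = ((l * p ^ n % (p ^ m - 1) : ℕ) : ℝ) / ((p : ℝ) ^ m - 1)} ∧
        zq.2 < p ∧ zq.1 = (x + zq.2) / p) :=
  ⟨existsUnique_shift_image hp hx, existsUnique_shift_preimage hp hx⟩

/-- for x ∈ D^m_l = {(l·p^n mod (p^m-1))/(p^m-1) : n < m}:
(i) there are unique y ∈ D^m_l and k ∈ {0,…,p-1} with x = (y+k)/p;
(ii) there are unique z ∈ D^m_l and q ∈ {0,…,p-1} with z = (x+q)/p. -/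
theorem stmt17 (p m l : ℕ) (hp : 2 ≤ p) (hm : 2 ≤ m)
    (hl1 : 1 ≤ l) (hl2 : l ≤ p ^ m - 2)
    (x : ℝ)
    (hx : x ∈ {z : ℝ | ∃ n < m,
      z = ((l * p ^ n % (p ^ m - 1) : ℕ) : ℝ) / ((p : ℝ) ^ m - 1)}) :
    (∃! yk : ℝ × ℕ,
      yk.1 ∈ {z : ℝ | ∃ n < m,
          z = ((l * p ^ n % (p ^ m - 1) : ℕ) : ℝ) / ((p : ℝ) ^ m - 1)} ∧
        yk.2 < p ∧ x = (yk.1 + yk.2) / p) ∧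
    (∃! zq : ℝ × ℕ,
      zq.1 ∈ {z : ℝ | ∃ n < m,
          z = ((l * p ^ n % (p ^ m - 1) : ℕ) : ℝ) / ((p : ℝ) ^ m - 1)} ∧
        zq.2 < p ∧ zq.1 = (x + zq.2) / p) :=
  stmt17_general p m l hp x hx
end
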